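/- arXiv:1302.3762 — 2 statements merged into one kernel-verified Lean document; each statement's English description precedes it below -/
import Mathlib

section
/- (Theorem 2, invariant set dilation, forward direction) Let A_cl be n×n, B_cl n×m real matrices, X₂ symmetric positive definite, G₂ an n×n matrix, α > 0, 0 < ε₂ < 1, and set Â = A_cl + (α/2)I. Define M = [[X₂, B_cl, -X₂], [B_cl^T, -αI, 0], [-X₂, 0, 0]], P = [I, 0, -2ε₂I], Q = [Â^T - (1/2)I, 0, I]. If M + Q^T G₂ P + P^T G₂^T Q is negative definite, then [[A_cl X₂ + X₂ A_cl^T + α X₂, B_cl], [B_cl^T, -αI]] is negative definite. -/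
/-! Congruence by `N = [I; K]` with `K = [½I - Âᵀ, 0]`, which is injective and satisfies
`Q N = 0`. Hence `Nᵀ (M + Qᵀ G₂ P + Pᵀ G₂ᵀ Q) N = Nᵀ M N`: the multiplier `G₂` drops out, and
`Nᵀ M N` is the target block matrix because `X₂ - (½I - Â) X₂ - X₂ (½I - Âᵀ) = A_cl X₂ + X₂ A_clᵀ + α X₂`.
Negative definiteness survives congruence by an injective matrix. -/

open Matrix

def Matrix.NegDef {n : Type*} [Fintype n] (M : Matrix n n ℝ) : Prop := (-M).PosDef

namespace Matrix

variable {R k l m n : Type*}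

lemma NegDef.transpose_mul_mul_same [Fintype k] [Fintype l] {A : Matrix k k ℝ} (hA : A.NegDef)
    {N : Matrix k l ℝ} (hN : Function.Injective N.mulVec) : (Nᵀ * A * N).NegDef := by
  have := PosDef.conjTranspose_mul_mul_same hA hN
  rwa [conjTranspose_eq_transpose_of_trivial, Matrix.mul_neg, Matrix.neg_mul] at this

lemma transpose_mul_add_mul_eq_of_mul_eq_zero [CommRing R] [Fintype k] [Fintype m]
    (A : Matrix k k R) (P Q : Matrix m k R) (G : Matrix m m R) {N : Matrix k l R}
    (hQN : Q * N = 0) : Nᵀ * (A + Qᵀ * G * P + Pᵀ * Gᵀ * Q) * N = Nᵀ * A * N := by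
  have hQGP : Nᵀ * (Qᵀ * G * P) * N = 0 := by
    rw [show Nᵀ * (Qᵀ * G * P) * N = (Q * N)ᵀ * (G * P * N) by
      simp only [transpose_mul, Matrix.mul_assoc], hQN, transpose_zero, Matrix.zero_mul]
  have hPGQ : Nᵀ * (Pᵀ * Gᵀ * Q) * N = 0 := by
    rw [show Nᵀ * (Pᵀ * Gᵀ * Q) * N = Nᵀ * Pᵀ * Gᵀ * (Q * N) by
      simp only [Matrix.mul_assoc], hQN, Matrix.mul_zero]
  simp only [Matrix.mul_add, Matrix.add_mul, hQGP, hPGQ, add_zero]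

section Blocks

variable [CommRing R] [Fintype n] [DecidableEq n]

lemma fromCols_neg_one_mul_fromRows_one [Fintype m] [DecidableEq m] (K : Matrix m n R) :
    fromCols (-K) (1 : Matrix m m R) * fromRows (1 : Matrix n n R) K = 0 := by
  simp [fromCols_mul_fromRows]

lemma mulVec_fromRows_one_injective (K : Matrix m n R) :
    Function.Injective (fromRows (1 : Matrix n n R) K).mulVec := by
  intro x y hxy
  simpa [fromRows_mulVec] using congrArg (· ∘ Sum.inl) hxy

lemma transpose_fromRows_one_mul_fromBlocks_mul_fromRows_one [Fintype m] (A : Matrix n n R)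
    (B : Matrix n m R) (C K : Matrix m n R) :
    (fromRows (1 : Matrix n n R) K)ᵀ * fromBlocks A B C (0 : Matrix m m R) *
      fromRows (1 : Matrix n n R) K = A + Kᵀ * C + B * K := by
  rw [transpose_fromRows, fromCols_mul_fromBlocks, fromCols_mul_fromRows]
  simp

omit [DecidableEq n] in
lemma fromBlocks_add_transpose_fromCols_mul_add_mul_fromCols (X L : Matrix n n R)
    (B : Matrix n m R) (C : Matrix m n R) (D : Matrix m m R) :
    fromBlocks X B C D + (fromCols L (0 : Matrix n m R))ᵀ * fromCols (-X) 0 +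
      fromRows (-X) 0 * fromCols L 0 = fromBlocks (X - Lᵀ * X - X * L) B C D := by
  rw [transpose_fromCols, fromRows_mul_fromCols, fromRows_mul_fromCols]
  simp [fromBlocks_add, sub_eq_add_neg]

end Blocks

end Matrix

theorem stmt13_general {n m : ℕ} (Acl : Matrix (Fin n) (Fin n) ℝ) (Bcl : Matrix (Fin n) (Fin m) ℝ)
    (X₂ : Matrix (Fin n) (Fin n) ℝ)
    (G₂ : Matrix (Fin n) (Fin n) ℝ) (α : ℝ)
    (Ahat : Matrix (Fin n) (Fin n) ℝ) (hAhat : Ahat = Acl + (α / 2) • 1)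
    (M : Matrix ((Fin n ⊕ Fin m) ⊕ Fin n) ((Fin n ⊕ Fin m) ⊕ Fin n) ℝ)
    (hM : M = Matrix.fromBlocks
      (Matrix.fromBlocks X₂ Bcl Bclᵀ ((-α) • (1 : Matrix (Fin m) (Fin m) ℝ)))
      (Matrix.fromRows (-X₂) 0)
      (Matrix.fromCols (-X₂) 0)
      0)
    (P : Matrix (Fin n) ((Fin n ⊕ Fin m) ⊕ Fin n) ℝ)
    (Q : Matrix (Fin n) ((Fin n ⊕ Fin m) ⊕ Fin n) ℝ)
    (hQ : Q = Matrix.fromCols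
      (Matrix.fromCols (Ahatᵀ - (1 / 2 : ℝ) • 1) 0)
      (1 : Matrix (Fin n) (Fin n) ℝ))
    (hDil : (M + Qᵀ * G₂ * P + Pᵀ * G₂ᵀ * Q).NegDef) :
    (Matrix.fromBlocks (Acl * X₂ + X₂ * Aclᵀ + α • X₂) Bcl Bclᵀ
      ((-α) • (1 : Matrix (Fin m) (Fin m) ℝ))).NegDef := by
  set L : Matrix (Fin n) (Fin n) ℝ := (1 / 2 : ℝ) • 1 - Ahatᵀ
  have hQN : Q * fromRows (1 : Matrix (Fin n ⊕ Fin m) (Fin n ⊕ Fin m) ℝ) (fromCols L 0) = 0 := by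
    rw [hQ, ← neg_sub, ← neg_zero, ← fromCols_neg, neg_zero]
    exact fromCols_neg_one_mul_fromRows_one _
  have hL : X₂ - Lᵀ * X₂ - X₂ * L = Acl * X₂ + X₂ * Aclᵀ + α • X₂ := by
    simp only [L, hAhat, transpose_sub, transpose_add, transpose_smul, transpose_transpose,
      transpose_one, Matrix.sub_mul, Matrix.mul_sub, Matrix.add_mul, Matrix.mul_add,
      Matrix.smul_mul, Matrix.mul_smul, Matrix.one_mul, Matrix.mul_one]
    module
  have hCongr := hDil.transpose_mul_mul_same (mulVec_fromRows_one_injective (fromCols L 0))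
  rwa [transpose_mul_add_mul_eq_of_mul_eq_zero _ _ _ _ hQN, hM,
    transpose_fromRows_one_mul_fromBlocks_mul_fromRows_one,
    fromBlocks_add_transpose_fromCols_mul_add_mul_fromCols, hL] at hCongr

theorem stmt13 {n m : ℕ} (Acl : Matrix (Fin n) (Fin n) ℝ) (Bcl : Matrix (Fin n) (Fin m) ℝ)
    (X₂ : Matrix (Fin n) (Fin n) ℝ) (hX₂ : X₂.PosDef) (hX₂s : X₂.IsSymm)
    (G₂ : Matrix (Fin n) (Fin n) ℝ) (α : ℝ) (hα : 0 < α)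
    (ε₂ : ℝ) (hε₂ : 0 < ε₂) (hε₂' : ε₂ < 1)
    (Ahat : Matrix (Fin n) (Fin n) ℝ) (hAhat : Ahat = Acl + (α / 2) • 1)
    (M : Matrix ((Fin n ⊕ Fin m) ⊕ Fin n) ((Fin n ⊕ Fin m) ⊕ Fin n) ℝ)
    (hM : M = Matrix.fromBlocks
      (Matrix.fromBlocks X₂ Bcl Bclᵀ ((-α) • (1 : Matrix (Fin m) (Fin m) ℝ)))
      (Matrix.fromRows (-X₂) 0)
      (Matrix.fromCols (-X₂) 0)
      0)
    (P : Matrix (Fin n) ((Fin n ⊕ Fin m) ⊕ Fin n) ℝ)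
    (hP : P = Matrix.fromCols
      (Matrix.fromCols (1 : Matrix (Fin n) (Fin n) ℝ) 0)
      ((-(2 * ε₂)) • (1 : Matrix (Fin n) (Fin n) ℝ)))
    (Q : Matrix (Fin n) ((Fin n ⊕ Fin m) ⊕ Fin n) ℝ)
    (hQ : Q = Matrix.fromCols
      (Matrix.fromCols (Ahatᵀ - (1 / 2 : ℝ) • 1) 0)
      (1 : Matrix (Fin n) (Fin n) ℝ))
    (hDil : (M + Qᵀ * G₂ * P + Pᵀ * G₂ᵀ * Q).NegDef) :
    (Matrix.fromBlocks (Acl * X₂ + X₂ * Aclᵀ + α • X₂) Bcl Bclᵀ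
      ((-α) • (1 : Matrix (Fin m) (Fin m) ℝ))).NegDef :=
  stmt13_general Acl Bcl X₂ G₂ α Ahat hAhat M hM P Q hQ hDil
end

section
/- (Theorem 3, constraint LMI dilation, equivalence) Let K be an m×n real matrix, c > 0 a real constant, X₃ symmetric positive definite, and 0 < ε₃ < 1. Define M = [[X₃, 0, -X₃], [0, -cI_m, 0], [-X₃, 0, 0]], P = [I, 0, -2ε₃I], Q = [-I, -K^T, I]. Then: (a) if there exists G₃ with M + Q^T G₃ P + P^T G₃^T Q negative definite, then [[-X₃, -X₃K^T], [-KX₃, -cI_m]] is negative definite; (b) conversely, if [[-X₃, -X₃K^T], [-KX₃, -cI_m]] is negative definite, then there exists ε̄ > 0 such that for all 0 < ε₃ ≤ ε̄, the choice G₃ = X₃ makes M + Q^T G₃ P + P^T G₃^T Q negative definite. -/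
open Matrix

/-!
Write `T` for the constraint matrix, `L = [I, Kᵀ]` and `N = [I; L]`. Then `Q N = 0`, so the
congruence `Nᵀ (·) N` kills the `G₃` terms of `M + Qᵀ G₃ P + Pᵀ G₃ᵀ Q` and maps it onto `T`;
as `N` has full column rank, (a) follows.

With `G₃ = X₃` the dilated matrix is `[[T, 2ε Lᵀ X₃], [2ε X₃ L, -4ε X₃]]`, whose Schur
complement is `T + ε Lᵀ X₃ L`. Negative definiteness is an open condition, so this stays
negative definite for small `ε`, which gives (b).
-/

open Filter Topology

namespace Matrix

theorem mulVec_injective_fromRows_one {m n R : Type*} [Fintype m] [DecidableEq m] [Semiring R]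
    (B : Matrix n m R) : Function.Injective (fromRows (1 : Matrix m m R) B).mulVec :=
  fun v w h => by simpa using congrArg (· ∘ Sum.inl) h

variable {m n R : Type*} [Fintype m] [Fintype n]

theorem PosDef.eventually_posDef_sub_smul {A B : Matrix n n ℝ} (hA : A.PosDef)
    (hB : B.IsHermitian) : ∀ᶠ t in 𝓝 (0 : ℝ), (A - t • B).PosDef := by
  have hsphere : ∀ᶠ t in 𝓝 (0 : ℝ), ∀ v ∈ Metric.sphere (0 : n → ℝ) 1,
      0 < v ⬝ᵥ (A - t • B) *ᵥ v := by
    refine (isCompact_sphere _ _).eventually_forall_of_forall_eventually fun v hv => ?_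
    have hcont : Continuous fun p : ℝ × (n → ℝ) => p.2 ⬝ᵥ (A - p.1 • B) *ᵥ p.2 := by fun_prop
    have hv : 0 < v ⬝ᵥ (A - (0 : ℝ) • B) *ᵥ v := by
      simpa using hA.dotProduct_mulVec_pos (ne_zero_of_mem_unit_sphere ⟨v, hv⟩)
    exact hcont.continuousAt.eventually (lt_mem_nhds hv)
  filter_upwards [hsphere] with t ht
  refine .of_dotProduct_mulVec_pos (hA.1.sub (hB.smul (IsSelfAdjoint.all t))) fun x hx => ?_
  have hx' : 0 < ‖x‖⁻¹ := inv_pos.2 (norm_pos_iff.2 hx)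
  have hunit := ht (‖x‖⁻¹ • x) (by simp [norm_smul, hx])
  rw [mulVec_smul, dotProduct_smul, smul_dotProduct, smul_eq_mul, smul_eq_mul] at hunit
  rw [star_trivial]
  exact pos_of_mul_pos_right (pos_of_mul_pos_right hunit hx'.le) hx'.le

variable [CommRing R] [PartialOrder R] [StarRing R] [StarOrderedRing R]

theorem PosDef.fromBlocks_of_schur₂₂ [DecidableEq n] {A : Matrix m m R} {B : Matrix m n R}
    {D : Matrix n n R} (hD : D.PosDef) [Invertible D] (hS : (A - B * D⁻¹ * Bᴴ).PosDef) :
    (fromBlocks A B Bᴴ D).PosDef := by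
  refine .of_dotProduct_mulVec_pos ((IsHermitian.fromBlocks₂₂ A B hD.1).2 hS.1) fun v hv => ?_
  rw [← Sum.elim_comp_inl_inr v, dotProduct_mulVec, schur_complement_eq₂₂ A B _ _ hD.1,
    ← dotProduct_mulVec, ← dotProduct_mulVec]
  rcases eq_or_ne (v ∘ Sum.inl) 0 with h | h
  · have hr : v ∘ Sum.inr ≠ 0 := fun h' => hv <| by
      rw [← Sum.elim_comp_inl_inr v, h, h']
      ext (i | i) <;> rfl
    rw [h]
    simpa using hD.dotProduct_mulVec_pos hr
  · exact add_pos_of_nonneg_of_pos (hD.posSemidef.dotProduct_mulVec_nonneg _)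
      (hS.dotProduct_mulVec_pos h)

end Matrix

section Dilation

variable {ι κ : Type*} [Fintype ι] [DecidableEq ι] [DecidableEq κ]

def constraintLMI (K : Matrix κ ι ℝ) (c : ℝ) (X : Matrix ι ι ℝ) : Matrix (ι ⊕ κ) (ι ⊕ κ) ℝ :=
  fromBlocks (-X) (-(X * Kᵀ)) (-(K * X)) ((-c) • 1)

def dilationM (c : ℝ) (X : Matrix ι ι ℝ) : Matrix ((ι ⊕ κ) ⊕ ι) ((ι ⊕ κ) ⊕ ι) ℝ :=
  fromBlocks (fromBlocks X 0 0 ((-c) • 1)) (fromRows (-X) 0) (fromCols (-X) 0) 0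

def dilationP (ε : ℝ) : Matrix ι ((ι ⊕ κ) ⊕ ι) ℝ :=
  fromCols (fromCols 1 0) ((-(2 * ε)) • 1)

def dilationQ (K : Matrix κ ι ℝ) : Matrix ι ((ι ⊕ κ) ⊕ ι) ℝ :=
  fromCols (fromCols (-1) (-Kᵀ)) 1

def dilationL (K : Matrix κ ι ℝ) : Matrix ι (ι ⊕ κ) ℝ :=
  fromCols 1 Kᵀ

def dilationN (K : Matrix κ ι ℝ) : Matrix ((ι ⊕ κ) ⊕ ι) (ι ⊕ κ) ℝ :=
  fromRows 1 (dilationL K)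

-- The `let` fixes the type of `P`; without it `Pᵀ * Gᵀ` elaborates with the `CStarMatrix` product.
def dilatedLMI (K : Matrix κ ι ℝ) (c : ℝ) (X : Matrix ι ι ℝ) (ε : ℝ) (G : Matrix ι ι ℝ) :
    Matrix ((ι ⊕ κ) ⊕ ι) ((ι ⊕ κ) ⊕ ι) ℝ :=
  let P : Matrix ι ((ι ⊕ κ) ⊕ ι) ℝ := dilationP ε
  dilationM c X + (dilationQ K)ᵀ * G * P + Pᵀ * Gᵀ * dilationQ K

lemma dilationQ_mul_dilationN [Fintype κ] (K : Matrix κ ι ℝ) : dilationQ K * dilationN K = 0 := by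
  rw [dilationQ, dilationN, dilationL, fromCols_mul_fromRows, ← fromCols_neg, Matrix.mul_one,
    Matrix.one_mul, neg_add_cancel]

lemma dilationN_transpose_mul_dilatedLMI_mul [Fintype κ] (K : Matrix κ ι ℝ) (c : ℝ)
    (X : Matrix ι ι ℝ) (ε : ℝ) (G : Matrix ι ι ℝ) :
    (dilationN K)ᵀ * dilatedLMI K c X ε G * dilationN K = constraintLMI K c X := by
  have hNQ : (dilationN K)ᵀ * (dilationQ K)ᵀ = 0 := by
    rw [← transpose_mul, dilationQ_mul_dilationN, transpose_zero]
  simp only [dilatedLMI, Matrix.add_mul, Matrix.mul_add, Matrix.mul_assoc,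
    dilationQ_mul_dilationN, Matrix.mul_zero, add_zero]
  simp only [← Matrix.mul_assoc, hNQ, Matrix.zero_mul, add_zero]
  ext (i | i) (j | j) <;>
    simp [dilationN, dilationM, dilationL, constraintLMI, transpose_fromRows, transpose_fromCols,
      fromCols_mul_fromBlocks, fromCols_mul_fromRows, mul_fromCols, fromRows_mul]

lemma dilatedLMI_self (K : Matrix κ ι ℝ) (c : ℝ) {X : Matrix ι ι ℝ} (hX : X.IsSymm) (ε : ℝ) :
    dilatedLMI K c X ε X = fromBlocks (constraintLMI K c X) ((2 * ε) • ((dilationL K)ᵀ * X))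
      ((2 * ε) • (X * dilationL K)) ((-(4 * ε)) • X) := by
  ext ((i | i) | i) ((j | j) | j) <;>
    simp [dilatedLMI, dilationM, dilationL, dilationP, dilationQ, constraintLMI, transpose_fromCols,
      mul_fromCols, fromRows_mul, hX.eq]
  ring

lemma negDef_constraintLMI_of_negDef_dilatedLMI [Fintype κ] (K : Matrix κ ι ℝ) (c : ℝ)
    (X : Matrix ι ι ℝ) (ε : ℝ) (G : Matrix ι ι ℝ) (h : (dilatedLMI K c X ε G).NegDef) :
    (constraintLMI K c X).NegDef := by
  rw [NegDef, ← dilationN_transpose_mul_dilatedLMI_mul K c X ε G, ← Matrix.neg_mul,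
    ← Matrix.mul_neg, ← conjTranspose_eq_transpose_of_trivial]
  exact h.conjTranspose_mul_mul_same (mulVec_injective_fromRows_one _)

lemma negDef_dilatedLMI_self [Fintype κ] (K : Matrix κ ι ℝ) (c : ℝ) {X : Matrix ι ι ℝ}
    (hX : X.PosDef) {ε : ℝ} (hε : 0 < ε)
    (h : (-constraintLMI K c X - ε • ((dilationL K)ᵀ * X * dilationL K)).PosDef) :
    (dilatedLMI K c X ε X).NegDef := by
  have hXs : X.IsSymm := isHermitian_iff_isSymm.1 hX.1
  set B := -((2 * ε) • ((dilationL K)ᵀ * X))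
  have hD : ((4 * ε) • X).PosDef := hX.smul (by positivity)
  have hXinv : X * X⁻¹ = 1 := X.mul_nonsing_inv ((isUnit_iff_isUnit_det X).1 hX.isUnit)
  have hDinv : ((4 * ε) • X)⁻¹ = (4 * ε)⁻¹ • X⁻¹ := by
    refine inv_eq_right_inv ?_
    rw [smul_mul_smul_comm, hXinv, mul_inv_cancel₀ (by positivity), one_smul]
  have hBH : Bᴴ = -((2 * ε) • (X * dilationL K)) := by
    simp [B, conjTranspose_eq_transpose_of_trivial, transpose_mul, hXs.eq]
  have hschur : B * ((4 * ε) • X)⁻¹ * Bᴴ = ε • ((dilationL K)ᵀ * X * dilationL K) := by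
    simp only [hBH, B, hDinv, Matrix.neg_mul, Matrix.mul_neg, neg_neg, Matrix.smul_mul,
      Matrix.mul_smul, smul_neg, smul_smul, Matrix.mul_assoc]
    rw [← Matrix.mul_assoc X X⁻¹, hXinv, Matrix.one_mul]
    congr 1
    field_simp
    ring
  let := hD.isUnit.invertible
  rw [NegDef, dilatedLMI_self K c hXs, fromBlocks_neg, ← hBH, neg_smul, neg_neg]
  exact PosDef.fromBlocks_of_schur₂₂ hD (hschur ▸ h)

lemma exists_negDef_dilatedLMI_self [Fintype κ] (K : Matrix κ ι ℝ) (c : ℝ) {X : Matrix ι ι ℝ}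
    (hX : X.PosDef) (hT : (constraintLMI K c X).NegDef) :
    ∃ εbar : ℝ, 0 < εbar ∧ ∀ ε : ℝ, 0 < ε → ε ≤ εbar → (dilatedLMI K c X ε X).NegDef := by
  have hB : ((dilationL K)ᵀ * X * dilationL K).IsHermitian := by
    simpa [conjTranspose_eq_transpose_of_trivial] using
      isHermitian_conjTranspose_mul_mul (dilationL K) hX.1
  obtain ⟨δ, hδ, hball⟩ := Metric.eventually_nhds_iff.1 (hT.eventually_posDef_sub_smul hB)
  refine ⟨δ / 2, half_pos hδ, fun ε hε hεδ => negDef_dilatedLMI_self K c hX hε (hball ?_)⟩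
  rw [Real.dist_0_eq_abs, abs_of_pos hε]
  linarith

end Dilation

theorem stmt14_general {n m : ℕ} (K : Matrix (Fin m) (Fin n) ℝ) (c : ℝ)
    (X₃ : Matrix (Fin n) (Fin n) ℝ) (hX₃ : X₃.PosDef) :
    (∀ ε₃ : ℝ, 0 < ε₃ → ε₃ < 1 →
      (∃ G₃ : Matrix (Fin n) (Fin n) ℝ,
        ((Matrix.fromBlocks
            (Matrix.fromBlocks X₃ 0 0 ((-c) • (1 : Matrix (Fin m) (Fin m) ℝ)))
            (Matrix.fromRows (-X₃) 0)
            (Matrix.fromCols (-X₃) 0)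
            0)
          + (Matrix.fromCols (Matrix.fromCols (-(1 : Matrix (Fin n) (Fin n) ℝ)) (-Kᵀ))
              (1 : Matrix (Fin n) (Fin n) ℝ))ᵀ * G₃ *
            (Matrix.fromCols (Matrix.fromCols (1 : Matrix (Fin n) (Fin n) ℝ) 0)
              ((-(2 * ε₃)) • (1 : Matrix (Fin n) (Fin n) ℝ)))
          + (Matrix.fromCols (Matrix.fromCols (1 : Matrix (Fin n) (Fin n) ℝ) 0)
              ((-(2 * ε₃)) • (1 : Matrix (Fin n) (Fin n) ℝ)))ᵀ * G₃ᵀ *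
            (Matrix.fromCols (Matrix.fromCols (-(1 : Matrix (Fin n) (Fin n) ℝ)) (-Kᵀ))
              (1 : Matrix (Fin n) (Fin n) ℝ))).NegDef) →
      (Matrix.fromBlocks (-X₃) (-(X₃ * Kᵀ)) (-(K * X₃))
        ((-c) • (1 : Matrix (Fin m) (Fin m) ℝ))).NegDef)
    ∧
    ((Matrix.fromBlocks (-X₃) (-(X₃ * Kᵀ)) (-(K * X₃))
        ((-c) • (1 : Matrix (Fin m) (Fin m) ℝ))).NegDef →
      ∃ εbar : ℝ, 0 < εbar ∧ ∀ ε₃ : ℝ, 0 < ε₃ → ε₃ ≤ εbar →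
        ((Matrix.fromBlocks
            (Matrix.fromBlocks X₃ 0 0 ((-c) • (1 : Matrix (Fin m) (Fin m) ℝ)))
            (Matrix.fromRows (-X₃) 0)
            (Matrix.fromCols (-X₃) 0)
            0)
          + (Matrix.fromCols (Matrix.fromCols (-(1 : Matrix (Fin n) (Fin n) ℝ)) (-Kᵀ))
              (1 : Matrix (Fin n) (Fin n) ℝ))ᵀ * X₃ *
            (Matrix.fromCols (Matrix.fromCols (1 : Matrix (Fin n) (Fin n) ℝ) 0)
              ((-(2 * ε₃)) • (1 : Matrix (Fin n) (Fin n) ℝ)))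
          + (Matrix.fromCols (Matrix.fromCols (1 : Matrix (Fin n) (Fin n) ℝ) 0)
              ((-(2 * ε₃)) • (1 : Matrix (Fin n) (Fin n) ℝ)))ᵀ * X₃ᵀ *
            (Matrix.fromCols (Matrix.fromCols (-(1 : Matrix (Fin n) (Fin n) ℝ)) (-Kᵀ))
              (1 : Matrix (Fin n) (Fin n) ℝ))).NegDef) :=
  ⟨fun ε₃ _ _ ⟨G₃, hG₃⟩ => negDef_constraintLMI_of_negDef_dilatedLMI K c X₃ ε₃ G₃ hG₃,
    exists_negDef_dilatedLMI_self K c hX₃⟩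

theorem stmt14 {n m : ℕ} (K : Matrix (Fin m) (Fin n) ℝ) (c : ℝ) (hc : 0 < c)
    (X₃ : Matrix (Fin n) (Fin n) ℝ) (hX₃ : X₃.PosDef) (hX₃s : X₃.IsSymm) :
    (∀ ε₃ : ℝ, 0 < ε₃ → ε₃ < 1 →
      (∃ G₃ : Matrix (Fin n) (Fin n) ℝ,
        ((Matrix.fromBlocks
            (Matrix.fromBlocks X₃ 0 0 ((-c) • (1 : Matrix (Fin m) (Fin m) ℝ)))
            (Matrix.fromRows (-X₃) 0)
            (Matrix.fromCols (-X₃) 0)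
            0)
          + (Matrix.fromCols (Matrix.fromCols (-(1 : Matrix (Fin n) (Fin n) ℝ)) (-Kᵀ))
              (1 : Matrix (Fin n) (Fin n) ℝ))ᵀ * G₃ *
            (Matrix.fromCols (Matrix.fromCols (1 : Matrix (Fin n) (Fin n) ℝ) 0)
              ((-(2 * ε₃)) • (1 : Matrix (Fin n) (Fin n) ℝ)))
          + (Matrix.fromCols (Matrix.fromCols (1 : Matrix (Fin n) (Fin n) ℝ) 0)
              ((-(2 * ε₃)) • (1 : Matrix (Fin n) (Fin n) ℝ)))ᵀ * G₃ᵀ *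
            (Matrix.fromCols (Matrix.fromCols (-(1 : Matrix (Fin n) (Fin n) ℝ)) (-Kᵀ))
              (1 : Matrix (Fin n) (Fin n) ℝ))).NegDef) →
      (Matrix.fromBlocks (-X₃) (-(X₃ * Kᵀ)) (-(K * X₃))
        ((-c) • (1 : Matrix (Fin m) (Fin m) ℝ))).NegDef)
    ∧
    ((Matrix.fromBlocks (-X₃) (-(X₃ * Kᵀ)) (-(K * X₃))
        ((-c) • (1 : Matrix (Fin m) (Fin m) ℝ))).NegDef →
      ∃ εbar : ℝ, 0 < εbar ∧ ∀ ε₃ : ℝ, 0 < ε₃ → ε₃ ≤ εbar →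
        ((Matrix.fromBlocks
            (Matrix.fromBlocks X₃ 0 0 ((-c) • (1 : Matrix (Fin m) (Fin m) ℝ)))
            (Matrix.fromRows (-X₃) 0)
            (Matrix.fromCols (-X₃) 0)
            0)
          + (Matrix.fromCols (Matrix.fromCols (-(1 : Matrix (Fin n) (Fin n) ℝ)) (-Kᵀ))
              (1 : Matrix (Fin n) (Fin n) ℝ))ᵀ * X₃ *
            (Matrix.fromCols (Matrix.fromCols (1 : Matrix (Fin n) (Fin n) ℝ) 0)
              ((-(2 * ε₃)) • (1 : Matrix (Fin n) (Fin n) ℝ)))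
          + (Matrix.fromCols (Matrix.fromCols (1 : Matrix (Fin n) (Fin n) ℝ) 0)
              ((-(2 * ε₃)) • (1 : Matrix (Fin n) (Fin n) ℝ)))ᵀ * X₃ᵀ *
            (Matrix.fromCols (Matrix.fromCols (-(1 : Matrix (Fin n) (Fin n) ℝ)) (-Kᵀ))
              (1 : Matrix (Fin n) (Fin n) ℝ))).NegDef) :=
  stmt14_general K c X₃ hX₃
end
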